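/- Let r ≥ 1 and let π be a noncrossing partition of {1,...,2r} all of whose blocks have even cardinality. Then π ∨ 1̂₂ʳ = 1̂_{2r} in NC(2r) if and only if π ≥ ν₀ᵣ, where ν₀ᵣ is the pair partition {(2r,1),(2,3),(4,5),...,(2r-2,2r-1)}. Moreover the set of such π forms a lattice isomorphic to NC(r). -/

import Mathlib

open Finset

def IsNoncrossing {s : Finset ℕ} (P : Finpartition s) : Prop :=
  ∀ B ∈ P.parts, ∀ B' ∈ P.parts, B ≠ B' →
    ¬ ∃ i j k l : ℕ, i ∈ B ∧ k ∈ B ∧ j ∈ B' ∧ l ∈ B' ∧ i < j ∧ j < k ∧ k < l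

/-- The join of `P` with the standard pair partition `{(1,2),…,(2r-1,2r)}` is the
one-block partition. -/
def JoinWithBracesIsTop (r : ℕ) (P : Finpartition (Finset.Icc 1 (2 * r))) : Prop :=
  ∀ a ∈ Finset.Icc 1 (2 * r), ∀ b ∈ Finset.Icc 1 (2 * r),
    Relation.EqvGen
      (fun x y => (∃ B ∈ P.parts, x ∈ B ∧ y ∈ B) ∨
        (∃ k : ℕ, 1 ≤ k ∧ k ≤ r ∧
          ((x = 2 * k - 1 ∧ y = 2 * k) ∨ (x = 2 * k ∧ y = 2 * k - 1)))) a b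

/-- `ν₀ᵣ ≤ P`: the pair partition `{(2r,1),(2,3),(4,5),…,(2r-2,2r-1)}` refines `P`. -/
def NuLe (r : ℕ) (P : Finpartition (Finset.Icc 1 (2 * r))) : Prop :=
  (∃ B ∈ P.parts, 1 ∈ B ∧ 2 * r ∈ B) ∧
  ∀ i : ℕ, 1 ≤ i → i ≤ r - 1 → ∃ B ∈ P.parts, 2 * i ∈ B ∧ 2 * i + 1 ∈ B

/-!
Pulling back along the map sending each point of `{1, …, 2r}` to the index of its pair in `ν₀ᵣ`
blows a noncrossing partition of `{1, …, r}` up to an even noncrossing partition above `ν₀ᵣ`;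
restricting to the odd points undoes this, and both operations are monotone. Above `ν₀ᵣ` the join
with the braces `{2k - 1, 2k}` links `1, 2, …, 2r` in a chain.

Conversely, let `π` be even and noncrossing with `π ∨ 1̂₂ʳ = 1̂_{2r}`. An interval that is a union
of blocks of `π` has even length, so if it starts at an odd number it is a union of braces as
well, and must be everything. Noncrossingness makes the span of a block, and each gap between
consecutive elements of a block, unions of blocks. The span of the block of `1`, the gap after
`2i` in its block, or the span of that block if `2i` is its last element, then force `2r` into
the block of `1` and `2i + 1` into the block of `2i`.
-/

namespace Finpartition

variable {α β γ : Type*} [DecidableEq α] [DecidableEq β] [DecidableEq γ]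
  {s : Finset α} {t : Finset β} {u : Finset γ}

def IsSaturated (P : Finpartition s) (S : Finset α) : Prop :=
  ∀ B ∈ P.parts, ∀ x ∈ B, x ∈ S → B ⊆ S

theorem IsSaturated.even_card {P : Finpartition s} {S : Finset α} (hS : P.IsSaturated S)
    (hSs : S ⊆ s) (heven : ∀ B ∈ P.parts, Even #B) : Even #S := by
  rw [← (P.restrict hSs).sum_card_parts, P.sum_restrict hSs _ card_empty, even_iff_two_dvd]
  refine dvd_sum fun B hB ↦ ?_
  rcases (B ∩ S).eq_empty_or_nonempty with h | ⟨x, hx⟩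
  · simp [inf_eq_inter, h]
  · rw [inf_eq_inter, inter_eq_left.2 (hS B hB x (mem_inter.1 hx).1 (mem_inter.1 hx).2),
      ← even_iff_two_dvd]
    exact heven B hB

def comap (P : Finpartition t) (f : α → β) (hf : Set.MapsTo f s t) : Finpartition s :=
  ofErase (P.parts.image fun C ↦ {x ∈ s | f x ∈ C})
    (supIndep_iff_pairwiseDisjoint.2 <| by
      intro _ hC' _ hD' hne
      obtain ⟨C, hC, rfl⟩ := mem_image.1 hC'
      obtain ⟨D, hD, rfl⟩ := mem_image.1 hD'
      refine disjoint_filter.2 fun x _ hxC hxD ↦ hne ?_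
      rw [P.eq_of_mem_parts hC hD hxC hxD])
    (by
      ext x
      simp only [sup_image, Function.id_comp, mem_sup, mem_filter]
      refine ⟨fun ⟨_, _, hx, _⟩ ↦ hx, fun hx ↦ ?_⟩
      obtain ⟨C, hC, hxC⟩ := P.exists_mem (hf hx)
      exact ⟨C, hC, hx, hxC⟩)

variable {P Q : Finpartition t} {f : α → β} {hf : Set.MapsTo f s t}

theorem mem_comap_parts {v : Finset α} :
    v ∈ (P.comap f hf).parts ↔ v.Nonempty ∧ ∃ C ∈ P.parts, {x ∈ s | f x ∈ C} = v := by
  rw [comap, ofErase_parts, mem_erase, mem_image, bot_eq_empty, ← nonempty_iff_ne_empty]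

theorem filter_mem_comap_parts {C : Finset β} (hC : C ∈ P.parts) {x : α} (hx : x ∈ s)
    (hxC : f x ∈ C) : {y ∈ s | f y ∈ C} ∈ (P.comap f hf).parts :=
  mem_comap_parts.2 ⟨⟨x, mem_filter.2 ⟨hx, hxC⟩⟩, C, hC, rfl⟩

theorem exists_mem_comap_parts_of_eq {x y : α} (hx : x ∈ s) (hy : y ∈ s) (hxy : f x = f y) :
    ∃ B ∈ (P.comap f hf).parts, x ∈ B ∧ y ∈ B := by
  obtain ⟨C, hC, hxC⟩ := P.exists_mem (hf hx)
  exact ⟨_, filter_mem_comap_parts hC hx hxC, mem_filter.2 ⟨hx, hxC⟩,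
    mem_filter.2 ⟨hy, hxy ▸ hxC⟩⟩

theorem comap_mono (h : P ≤ Q) : P.comap f hf ≤ Q.comap f hf := by
  intro v hv
  obtain ⟨⟨x, hxv⟩, C, hC, rfl⟩ := mem_comap_parts.1 hv
  obtain ⟨D, hD, hCD⟩ := h hC
  have hx := mem_filter.1 hxv
  exact ⟨_, filter_mem_comap_parts hD hx.1 (hCD hx.2), fun y hy ↦
    mem_filter.2 ⟨(mem_filter.1 hy).1, hCD (mem_filter.1 hy).2⟩⟩

theorem comap_comap (P : Finpartition u) {g : β → γ} (hg : Set.MapsTo g t u) :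
    (P.comap g hg).comap f hf = P.comap (g ∘ f) (hg.comp hf) := by
  ext v
  simp only [mem_comap_parts]
  constructor
  · rintro ⟨hv, _, ⟨-, C, hC, rfl⟩, rfl⟩
    refine ⟨hv, C, hC, ?_⟩
    ext x
    simp only [mem_filter, Function.comp_apply]
    exact ⟨fun h ↦ ⟨h.1, hf h.1, h.2⟩, fun h ↦ ⟨h.1, h.2.2⟩⟩
  · rintro ⟨⟨x, hxv⟩, C, hC, rfl⟩
    have hx := mem_filter.1 hxv
    refine ⟨⟨x, hxv⟩, _,
      mem_comap_parts.1 (filter_mem_comap_parts (hf := hg) hC (hf hx.1) hx.2), ?_⟩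
    ext y
    simp only [mem_filter, Function.comp_apply]
    exact ⟨fun h ↦ ⟨h.1, h.2.2⟩, fun h ↦ ⟨h.1, hf h.1, h.2⟩⟩

theorem comap_eq_self (P : Finpartition s) {f : α → α} (hf : Set.MapsTo f s s)
    (h : ∀ x ∈ s, ∃ B ∈ P.parts, x ∈ B ∧ f x ∈ B) : P.comap f hf = P := by
  have hfilter : ∀ B ∈ P.parts, {x ∈ s | f x ∈ B} = B := by
    intro B hB
    ext x
    rw [mem_filter]
    refine ⟨fun ⟨hx, hfx⟩ ↦ ?_, fun hx ↦ ⟨P.le hB hx, ?_⟩⟩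
    · obtain ⟨B', hB', hxB', hfxB'⟩ := h x hx
      rwa [P.eq_of_mem_parts hB hB' hfx hfxB']
    · obtain ⟨B', hB', hxB', hfxB'⟩ := h x (P.le hB hx)
      rwa [P.eq_of_mem_parts hB hB' hx hxB']
  ext v
  rw [mem_comap_parts]
  constructor
  · rintro ⟨-, B, hB, rfl⟩
    rwa [hfilter B hB]
  · intro hv
    exact ⟨P.nonempty_of_mem_parts hv, v, hv, hfilter v hv⟩

end Finpartition

section Noncrossing

variable {s : Finset ℕ} {P : Finpartition s}

theorem IsNoncrossing.eq_of_le (hP : IsNoncrossing P) {C D : Finset ℕ} (hC : C ∈ P.parts)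
    (hD : D ∈ P.parts) {a b c d : ℕ} (ha : a ∈ C) (hb : b ∈ D) (hc : c ∈ C) (hd : d ∈ D)
    (hab : a ≤ b) (hbc : b ≤ c) (hcd : c ≤ d) : C = D := by
  by_contra hne
  have hdisj := disjoint_left.1 (P.disjoint hC hD hne)
  refine hP C hC D hD hne ⟨a, b, c, d, ha, hc, hb, hd, hab.lt_of_ne ?_, hbc.lt_of_ne ?_,
    hcd.lt_of_ne ?_⟩
  · rintro rfl
    exact hdisj ha hb
  · rintro rfl
    exact hdisj hc hb
  · rintro rfl
    exact hdisj hc hd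

theorem IsNoncrossing.comap {t : Finset ℕ} {Q : Finpartition t} (hQ : IsNoncrossing Q)
    {f : ℕ → ℕ} (hf : Set.MapsTo f s t) (hmono : MonotoneOn f s) :
    IsNoncrossing (Q.comap f hf) := by
  rintro u hu v hv huv ⟨i, j, k, l, hi, hk, hj, hl, hij, hjk, hkl⟩
  obtain ⟨-, C, hC, rfl⟩ := Finpartition.mem_comap_parts.1 hu
  obtain ⟨-, D, hD, rfl⟩ := Finpartition.mem_comap_parts.1 hv
  simp only [mem_filter] at hi hj hk hl
  exact huv (congrArg (fun C ↦ {x ∈ s | f x ∈ C}) (hQ.eq_of_le hC hD hi.2 hj.2 hk.2 hl.2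
    (hmono hi.1 hj.1 hij.le) (hmono hj.1 hk.1 hjk.le) (hmono hk.1 hl.1 hkl.le)))

theorem IsNoncrossing.subset_Ioo (hP : IsNoncrossing P) {B B' : Finset ℕ} (hB : B ∈ P.parts)
    (hB' : B' ∈ P.parts) (hne : B' ≠ B) {a b x : ℕ} (ha : a ∈ B) (hb : b ∈ B) (hx : x ∈ B')
    (hxab : x ∈ Ioo a b) : B' ⊆ Ioo a b := by
  intro y hy
  rw [mem_Ioo] at hxab ⊢
  by_contra hy'
  rcases le_or_gt y a with hya | hay
  · exact hne (hP.eq_of_le hB' hB hy ha hx hb hya hxab.1.le hxab.2.le)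
  · exact hne (hP.eq_of_le hB hB' ha hx hb hy hxab.1.le hxab.2.le (by omega)).symm

theorem IsNoncrossing.isSaturated_Icc_min'_max' (hP : IsNoncrossing P) {B : Finset ℕ}
    (hB : B ∈ P.parts) (hne : B.Nonempty) : P.IsSaturated (Icc (B.min' hne) (B.max' hne)) := by
  intro B' hB' x hx hxI
  by_cases hBB : B' = B
  · subst hBB
    exact fun y hy ↦ mem_Icc.2 ⟨B'.min'_le y hy, B'.le_max' y hy⟩
  have hxI' : x ∈ Ioo (B.min' hne) (B.max' hne) := by
    have hdisj := disjoint_left.1 (P.disjoint hB' hB hBB) hx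
    have hmin : x ≠ B.min' hne := fun h ↦ hdisj (h ▸ B.min'_mem hne)
    have hmax : x ≠ B.max' hne := fun h ↦ hdisj (h ▸ B.max'_mem hne)
    rw [mem_Icc] at hxI
    exact mem_Ioo.2 ⟨lt_of_le_of_ne hxI.1 hmin.symm, lt_of_le_of_ne hxI.2 hmax⟩
  exact (hP.subset_Ioo hB hB' hBB (B.min'_mem hne) (B.max'_mem hne) hx hxI').trans
    Ioo_subset_Icc_self

theorem IsNoncrossing.isSaturated_Ioo (hP : IsNoncrossing P) {B : Finset ℕ} (hB : B ∈ P.parts)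
    {a b : ℕ} (ha : a ∈ B) (hb : b ∈ B) (hgap : ∀ x ∈ B, x ∉ Ioo a b) :
    P.IsSaturated (Ioo a b) := by
  intro B' hB' x hx hxI
  have hne : B' ≠ B := by
    rintro rfl
    exact hgap x hx hxI
  exact hP.subset_Ioo hB hB' hne ha hb hx hxI

end Noncrossing

section Braces

variable {r : ℕ} {P : Finpartition (Icc 1 (2 * r))}

theorem JoinWithBracesIsTop.mem_of_isSaturated (htop : JoinWithBracesIsTop r P)
    {S : Finset ℕ} (hS : P.IsSaturated S)
    (hbraces : ∀ k, 1 ≤ k → k ≤ r → (2 * k - 1 ∈ S ↔ 2 * k ∈ S))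
    {u v : ℕ} (hu : u ∈ Icc 1 (2 * r)) (huS : u ∈ S) (hv : v ∈ Icc 1 (2 * r)) : v ∈ S := by
  have hequiv : Equivalence fun x y : ℕ ↦ (x ∈ S ↔ y ∈ S) :=
    ⟨fun _ ↦ Iff.rfl, Iff.symm, Iff.trans⟩
  refine (hequiv.eqvGen_iff.1 (Relation.EqvGen.mono ?_ _ _ (htop u hu v hv))).1 huS
  rintro x y (⟨B, hB, hxB, hyB⟩ | ⟨k, hk1, hkr, ⟨rfl, rfl⟩ | ⟨rfl, rfl⟩⟩)
  · exact ⟨fun hx ↦ hS B hB x hxB hx hyB, fun hy ↦ hS B hB y hyB hy hxB⟩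
  · exact hbraces k hk1 hkr
  · exact (hbraces k hk1 hkr).symm

/-- A saturated interval has even length, so if it starts at an odd number it is also a union of
braces, which the join being `1̂` rules out unless it is everything. -/
theorem JoinWithBracesIsTop.isSaturated_Icc_cases (htop : JoinWithBracesIsTop r P)
    (heven : ∀ B ∈ P.parts, Even #B) {a b : ℕ} (hS : P.IsSaturated (Icc a b)) (ha : 1 ≤ a)
    (hab : a ≤ b) (hb : b ≤ 2 * r) : a % 2 = 0 ∧ b % 2 = 1 ∨ a = 1 ∧ b = 2 * r := by
  obtain ⟨m, hm⟩ := hS.even_card (Icc_subset_Icc ha hb) heven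
  rw [Nat.card_Icc] at hm
  by_cases ha2 : a % 2 = 0
  · left
    omega
  have hall : ∀ v ∈ Icc 1 (2 * r), v ∈ Icc a b := fun v hv ↦
    htop.mem_of_isSaturated hS (fun k _ _ ↦ by simp only [mem_Icc]; omega)
      (mem_Icc.2 ⟨ha, hab.trans hb⟩) (mem_Icc.2 ⟨le_rfl, hab⟩) hv
  have h1 := mem_Icc.1 (hall 1 (mem_Icc.2 ⟨le_rfl, by omega⟩))
  have h2 := mem_Icc.1 (hall (2 * r) (mem_Icc.2 ⟨by omega, le_rfl⟩))
  omega

theorem JoinWithBracesIsTop.exists_part_one_two_mul (hr : 1 ≤ r) (htop : JoinWithBracesIsTop r P)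
    (hnc : IsNoncrossing P) (heven : ∀ B ∈ P.parts, Even #B) :
    ∃ B ∈ P.parts, 1 ∈ B ∧ 2 * r ∈ B := by
  obtain ⟨B, hB, h1B⟩ := P.exists_mem (mem_Icc.2 ⟨le_rfl, by omega⟩ : 1 ∈ Icc 1 (2 * r))
  have hne : B.Nonempty := ⟨1, h1B⟩
  have hmin : B.min' hne = 1 :=
    le_antisymm (B.min'_le 1 h1B) (mem_Icc.1 (P.le hB (B.min'_mem hne))).1
  have hS := hnc.isSaturated_Icc_min'_max' hB hne
  rw [hmin] at hS
  obtain h | ⟨-, h⟩ := htop.isSaturated_Icc_cases heven hS le_rfl (B.le_max' 1 h1B)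
    (mem_Icc.1 (P.le hB (B.max'_mem hne))).2
  · omega
  · exact ⟨B, hB, h1B, h ▸ B.max'_mem hne⟩

theorem JoinWithBracesIsTop.exists_part_pair (htop : JoinWithBracesIsTop r P)
    (hnc : IsNoncrossing P) (heven : ∀ B ∈ P.parts, Even #B) {i : ℕ} (hi : 1 ≤ i)
    (hir : i ≤ r - 1) : ∃ B ∈ P.parts, 2 * i ∈ B ∧ 2 * i + 1 ∈ B := by
  obtain ⟨B, hB, hiB⟩ := P.exists_mem (mem_Icc.2 ⟨by omega, by omega⟩ : 2 * i ∈ Icc 1 (2 * r))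
  refine ⟨B, hB, hiB, ?_⟩
  by_contra hi'B
  by_cases habove : ∃ c, c ∈ B ∧ 2 * i < c
  · -- the gap of `B` right after `2i` starts at an odd number
    obtain ⟨c, ⟨hcB, hic⟩, hgap⟩ : ∃ c, (c ∈ B ∧ 2 * i < c) ∧ ∀ x ∈ B, x ∉ Ioo (2 * i) c :=
      ⟨Nat.find habove, Nat.find_spec habove, fun x hx hxI ↦
        Nat.find_min habove (mem_Ioo.1 hxI).2 ⟨hx, (mem_Ioo.1 hxI).1⟩⟩
    have hc : c ≠ 2 * i + 1 := fun h ↦ hi'B (h ▸ hcB)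
    have hcr := mem_Icc.1 (P.le hB hcB)
    have hIoo : Ioo (2 * i) c = Icc (2 * i + 1) (c - 1) := by
      ext x
      simp only [mem_Ioo, mem_Icc]
      omega
    have hS := hnc.isSaturated_Ioo hB hiB hcB hgap
    rw [hIoo] at hS
    have := htop.isSaturated_Icc_cases heven hS (by omega) (by omega) (by omega)
    omega
  · push Not at habove
    have hne : B.Nonempty := ⟨2 * i, hiB⟩
    have hmax : B.max' hne = 2 * i := le_antisymm (B.max'_le hne _ habove) (B.le_max' _ hiB)
    have hS := hnc.isSaturated_Icc_min'_max' hB hne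
    rw [hmax] at hS
    have := htop.isSaturated_Icc_cases heven hS (mem_Icc.1 (P.le hB (B.min'_mem hne))).1
      (B.min'_le _ hiB) (by omega)
    omega

theorem JoinWithBracesIsTop.nuLe (hr : 1 ≤ r) (htop : JoinWithBracesIsTop r P)
    (hnc : IsNoncrossing P) (heven : ∀ B ∈ P.parts, Even #B) : NuLe r P :=
  ⟨htop.exists_part_one_two_mul hr hnc heven,
    fun _ hi hir ↦ htop.exists_part_pair hnc heven hi hir⟩

theorem NuLe.joinWithBracesIsTop (hnu : NuLe r P) : JoinWithBracesIsTop r P := by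
  have step : ∀ n, 1 ≤ n → n < 2 * r → (∃ B ∈ P.parts, n ∈ B ∧ n + 1 ∈ B) ∨
      ∃ k, 1 ≤ k ∧ k ≤ r ∧ n = 2 * k - 1 ∧ n + 1 = 2 * k := by
    intro n hn1 hn2
    obtain ⟨k, rfl | rfl⟩ := Nat.even_or_odd' n
    · exact .inl (hnu.2 k (by omega) (by omega))
    · exact .inr ⟨k + 1, by omega, by omega, by omega, by omega⟩
  intro a ha b hb
  rw [mem_Icc] at ha hb
  refine Relation.EqvGen.reflTransGen_le_eqvGen _ _ _
    (reflTransGen_of_succ _ (fun i hi ↦ ?_) fun i hi ↦ ?_) <;>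
    rw [Set.mem_Ico] at hi <;> rw [Order.succ_eq_add_one] <;>
    rcases step i (by omega) (by omega) with ⟨B, hB, hiB, hiB'⟩ | ⟨k, hk1, hkr, hk, hk'⟩
  · exact .inl ⟨B, hB, hiB, hiB'⟩
  · exact .inr ⟨k, hk1, hkr, .inl ⟨hk, hk'⟩⟩
  · exact .inl ⟨B, hB, hiB', hiB⟩
  · exact .inr ⟨k, hk1, hkr, .inr ⟨hk', hk⟩⟩

end Braces

section Blowup

variable {r : ℕ}

/-- The index of the pair of `ν₀ᵣ` containing `x`, numbered so that `2i - 1` lies in pair `i`: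
pair `1` is `{2r, 1}` and pair `i ≥ 2` is `{2i - 2, 2i - 1}`. -/
def nuPairIndex (r x : ℕ) : ℕ := if x = 2 * r then 1 else x / 2 + 1

theorem mapsTo_nuPairIndex : Set.MapsTo (nuPairIndex r) (Icc 1 (2 * r)) (Icc 1 r) := by
  intro x hx
  simp only [coe_Icc, Set.mem_Icc, nuPairIndex] at hx ⊢
  split_ifs <;> omega

theorem mapsTo_two_mul_sub_one : Set.MapsTo (fun i ↦ 2 * i - 1) (Icc 1 r) (Icc 1 (2 * r)) := by
  intro i hi
  simp only [coe_Icc, Set.mem_Icc] at hi ⊢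
  omega

theorem card_filter_nuPairIndex_eq {i : ℕ} (hi : i ∈ Icc 1 r) :
    #{x ∈ Icc 1 (2 * r) | nuPairIndex r x = i} = 2 := by
  rw [mem_Icc] at hi
  rw [card_eq_two]
  refine ⟨2 * i - 1, if i = 1 then 2 * r else 2 * i - 2, by split_ifs <;> omega, ?_⟩
  ext x
  simp only [mem_filter, mem_Icc, mem_insert, mem_singleton]
  unfold nuPairIndex
  split_ifs <;> omega

def blowup (σ : Finpartition (Icc 1 r)) : Finpartition (Icc 1 (2 * r)) :=
  σ.comap (nuPairIndex r) mapsTo_nuPairIndex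

def restrictOdd (P : Finpartition (Icc 1 (2 * r))) : Finpartition (Icc 1 r) :=
  P.comap (fun i ↦ 2 * i - 1) mapsTo_two_mul_sub_one

theorem IsNoncrossing.blowup {σ : Finpartition (Icc 1 r)} (hσ : IsNoncrossing σ) :
    IsNoncrossing (blowup σ) := by
  have hmono : ∀ x y, x ≤ y → y ≠ 2 * r → nuPairIndex r x ≤ nuPairIndex r y := by
    intro x y hxy hy
    simp only [nuPairIndex]
    split_ifs <;> omega
  rintro u hu v hv huv ⟨i, j, k, l, hi, hk, hj, hl, hij, hjk, hkl⟩
  obtain ⟨-, C, hC, rfl⟩ := Finpartition.mem_comap_parts.1 hu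
  obtain ⟨-, D, hD, rfl⟩ := Finpartition.mem_comap_parts.1 hv
  simp only [mem_filter, mem_Icc] at hi hj hk hl
  refine huv (congrArg (fun C ↦ {x ∈ Icc 1 (2 * r) | nuPairIndex r x ∈ C}) ?_)
  by_cases hl2r : l = 2 * r
  · -- `2r` is relabelled `1`, so the crossing is read cyclically
    have h1 : nuPairIndex r l = 1 := by simp [nuPairIndex, hl2r]
    refine (hσ.eq_of_le hD hC (h1 ▸ hl.2) hi.2 hj.2 hk.2 ?_ (hmono _ _ hij.le (by omega))
      (hmono _ _ hjk.le (by omega))).symm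
    exact (mem_Icc.1 (mapsTo_nuPairIndex (mem_coe.2 (mem_Icc.2 hi.1)))).1
  · exact hσ.eq_of_le hC hD hi.2 hj.2 hk.2 hl.2 (hmono _ _ hij.le (by omega))
      (hmono _ _ hjk.le (by omega)) (hmono _ _ hkl.le hl2r)

theorem even_card_of_mem_blowup_parts {σ : Finpartition (Icc 1 r)} {B : Finset ℕ}
    (hB : B ∈ (blowup σ).parts) : Even #B := by
  obtain ⟨-, C, hC, rfl⟩ := Finpartition.mem_comap_parts.1 hB
  rw [card_eq_sum_card_fiberwise (s := {x ∈ Icc 1 (2 * r) | nuPairIndex r x ∈ C}) (t := C)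
    fun x hx ↦ (mem_filter.1 hx).2]
  refine even_iff_two_dvd.2 (dvd_sum fun i hi ↦ ?_)
  rw [filter_filter]
  have hfib : {x ∈ Icc 1 (2 * r) | nuPairIndex r x ∈ C ∧ nuPairIndex r x = i} =
      {x ∈ Icc 1 (2 * r) | nuPairIndex r x = i} :=
    filter_congr fun x _ ↦ ⟨And.right, fun h ↦ ⟨h ▸ hi, h⟩⟩
  rw [hfib, card_filter_nuPairIndex_eq (σ.le hC hi)]

theorem nuLe_blowup (hr : 1 ≤ r) (σ : Finpartition (Icc 1 r)) : NuLe r (blowup σ) := by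
  refine ⟨Finpartition.exists_mem_comap_parts_of_eq (mem_Icc.2 ⟨le_rfl, by omega⟩)
    (mem_Icc.2 ⟨by omega, le_rfl⟩) ?_, fun i hi hir ↦
    Finpartition.exists_mem_comap_parts_of_eq (mem_Icc.2 ⟨by omega, by omega⟩)
    (mem_Icc.2 ⟨by omega, by omega⟩) ?_⟩ <;>
  · simp only [nuPairIndex]
    split_ifs <;> omega

theorem IsNoncrossing.restrictOdd {P : Finpartition (Icc 1 (2 * r))} (hP : IsNoncrossing P) :
    IsNoncrossing (restrictOdd P) :=
  hP.comap _ fun _ _ _ _ h ↦ by omega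

theorem restrictOdd_blowup (σ : Finpartition (Icc 1 r)) : restrictOdd (blowup σ) = σ := by
  rw [restrictOdd, blowup, Finpartition.comap_comap]
  refine σ.comap_eq_self _ fun i hi ↦ ?_
  obtain ⟨C, hC, hiC⟩ := σ.exists_mem hi
  refine ⟨C, hC, hiC, ?_⟩
  rw [mem_Icc] at hi
  have hidx : nuPairIndex r (2 * i - 1) = i := by
    simp only [nuPairIndex]
    split_ifs <;> omega
  rwa [Function.comp_apply, hidx]

theorem blowup_restrictOdd {P : Finpartition (Icc 1 (2 * r))} (hnu : NuLe r P) :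
    blowup (restrictOdd P) = P := by
  rw [restrictOdd, blowup, Finpartition.comap_comap]
  refine P.comap_eq_self _ fun x hx ↦ ?_
  rw [mem_Icc] at hx
  simp only [Function.comp_apply, nuPairIndex]
  by_cases hx2r : x = 2 * r
  · obtain ⟨B, hB, h1B, h2rB⟩ := hnu.1
    exact ⟨B, hB, hx2r ▸ h2rB, by simpa [hx2r] using h1B⟩
  obtain ⟨k, rfl | rfl⟩ := Nat.even_or_odd' x
  · obtain ⟨B, hB, hkB, hk'B⟩ := hnu.2 k (by omega) (by omega)
    refine ⟨B, hB, hkB, ?_⟩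
    rwa [if_neg hx2r, show 2 * (2 * k / 2 + 1) - 1 = 2 * k + 1 by omega]
  · obtain ⟨B, hB, hkB⟩ := P.exists_mem (mem_Icc.2 hx)
    refine ⟨B, hB, hkB, ?_⟩
    rwa [if_neg hx2r, show 2 * ((2 * k + 1) / 2 + 1) - 1 = 2 * k + 1 by omega]

def evenJoinTopOrderIso (hr : 1 ≤ r) :
    {P : Finpartition (Icc 1 (2 * r)) //
        IsNoncrossing P ∧ (∀ B ∈ P.parts, Even #B) ∧ JoinWithBracesIsTop r P} ≃o
      {σ : Finpartition (Icc 1 r) // IsNoncrossing σ} :=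
  Equiv.toOrderIso
    { toFun := fun P ↦ ⟨restrictOdd P.1, P.2.1.restrictOdd⟩
      invFun := fun σ ↦ ⟨blowup σ.1, σ.2.blowup, fun _ ↦ even_card_of_mem_blowup_parts,
        (nuLe_blowup hr σ.1).joinWithBracesIsTop⟩
      left_inv := fun P ↦ Subtype.ext (blowup_restrictOdd (P.2.2.2.nuLe hr P.2.1 P.2.2.1))
      right_inv := fun σ ↦ Subtype.ext (restrictOdd_blowup σ.1) }
    (fun _ _ h ↦ Finpartition.comap_mono (hf := mapsTo_two_mul_sub_one) h)
    fun _ _ h ↦ Finpartition.comap_mono (hf := mapsTo_nuPairIndex) h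

end Blowup

/-- For even noncrossing partitions `π` of `{1,…,2r}`, `π ∨ 1̂₂ʳ = 1̂₂ᵣ` iff `π ≥ ν₀ᵣ`;
moreover the collection of such partitions is order isomorphic (hence lattice
isomorphic) to `NC(r)`. -/
theorem even_upper_complements_iff_and_iso (r : ℕ) (hr : 1 ≤ r) :
    (∀ P : Finpartition (Finset.Icc 1 (2 * r)), IsNoncrossing P →
      (∀ B ∈ P.parts, Even B.card) → (JoinWithBracesIsTop r P ↔ NuLe r P)) ∧
    Nonempty
      ({P : Finpartition (Finset.Icc 1 (2 * r)) //
          IsNoncrossing P ∧ (∀ B ∈ P.parts, Even B.card) ∧ JoinWithBracesIsTop r P} ≃o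
       {P : Finpartition (Finset.Icc 1 r) // IsNoncrossing P}) :=
  ⟨fun _ hnc heven ↦ ⟨fun htop ↦ htop.nuLe hr hnc heven, NuLe.joinWithBracesIsTop⟩,
    ⟨evenJoinTopOrderIso hr⟩⟩
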